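/- arXiv:2407.10840 — 9 statements merged into one kernel-verified Lean document; each statement's English description precedes it below -/
import Mathlib

section
/- For p ≥ 3, the function h(a) = a^p + (1-a)^{p-1}(a+p-1) on [0,1] attains its minimum on the subinterval [1/2, 1]; in fact h is strictly decreasing on (0, 1/2). -/
/-! On `(0, 1/2)` the derivative `p (a^(p-1) - (1-a)^(p-2) (a+p-2))` of `h` is negative, since
`a^(p-1) < a^(p-2) < (1-a)^(p-2)` and `a + p - 2 ≥ 1`. Hence a minimiser of the continuous `h`
over `[1/2, 1]` is a minimiser over `[0, 1]`. -/

open Real Set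

noncomputable def hFun (p a : ℝ) : ℝ := a ^ p + (1 - a) ^ (p - 1) * (a + p - 1)

theorem continuous_hFun {p : ℝ} (hp : 1 ≤ p) : Continuous (hFun p) := by
  unfold hFun
  have hpow := Real.continuous_rpow_const (q := p) (by linarith)
  have hpow' := Real.continuous_rpow_const (q := p - 1) (by linarith)
  fun_prop

theorem hasDerivAt_hFun (p : ℝ) {a : ℝ} (ha₀ : 0 < a) (ha₁ : a < 1) :
    HasDerivAt (hFun p) (p * (a ^ (p - 1) - (1 - a) ^ (p - 2) * (a + p - 2))) a := by
  have hb : 0 < 1 - a := by linarith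
  have hfirst : HasDerivAt (fun x : ℝ => x ^ p) (p * a ^ (p - 1)) a :=
    Real.hasDerivAt_rpow_const (Or.inl ha₀.ne')
  have hsecond :
      HasDerivAt (fun x : ℝ => (1 - x) ^ (p - 1)) (-((p - 1) * (1 - a) ^ (p - 2))) a := by
    have h := ((hasDerivAt_id' a).const_sub 1).rpow_const (p := p - 1) (Or.inl hb.ne')
    rw [show p - 1 - 1 = p - 2 by ring] at h
    convert h using 1
    ring
  have hsplit : (1 - a) ^ (p - 1) = (1 - a) ^ (p - 2) * (1 - a) := by
    rw [← Real.rpow_add_one hb.ne']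
    ring_nf
  exact (hfirst.add (hsecond.mul (((hasDerivAt_id' a).add_const p).sub_const 1))).congr_deriv
    (by rw [hsplit]; ring)

theorem rpow_sub_one_lt_one_sub_rpow_sub_two_mul {p a : ℝ} (hp : 3 ≤ p) (ha₀ : 0 < a)
    (ha : a < 1 / 2) : a ^ (p - 1) < (1 - a) ^ (p - 2) * (a + p - 2) :=
  calc a ^ (p - 1) < a ^ (p - 2) :=
        Real.rpow_lt_rpow_of_exponent_gt ha₀ (by linarith) (by linarith)
    _ < (1 - a) ^ (p - 2) := Real.rpow_lt_rpow ha₀.le (by linarith) (by linarith)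
    _ ≤ (1 - a) ^ (p - 2) * (a + p - 2) :=
        le_mul_of_one_le_right (Real.rpow_nonneg (by linarith) _) (by linarith)

theorem strictAntiOn_hFun {p : ℝ} (hp : 3 ≤ p) : StrictAntiOn (hFun p) (Icc 0 (1 / 2)) := by
  refine strictAntiOn_of_deriv_neg (convex_Icc _ _) (continuous_hFun (by linarith)).continuousOn
    fun a ha => ?_
  rw [interior_Icc] at ha
  obtain ⟨ha₀, ha⟩ := ha
  rw [(hasDerivAt_hFun p ha₀ (by linarith)).deriv]
  exact mul_neg_of_pos_of_neg (by linarith)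
    (sub_neg.mpr (rpow_sub_one_lt_one_sub_rpow_sub_two_mul hp ha₀ ha))

theorem exists_isMinOn_Icc_of_antitoneOn {f : ℝ → ℝ} {a b c : ℝ} (hbc : b ≤ c)
    (hf : ContinuousOn f (Icc b c)) (hanti : AntitoneOn f (Icc a b)) :
    ∃ x ∈ Icc b c, IsMinOn f (Icc a c) x := by
  obtain ⟨x, hx, hmin⟩ := isCompact_Icc.exists_isMinOn (nonempty_Icc.mpr hbc) hf
  refine ⟨x, hx, fun y hy => ?_⟩
  rcases le_or_gt b y with hby | hyb
  · exact hmin ⟨hby, hy.2⟩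
  · calc f x ≤ f b := hmin (left_mem_Icc.mpr hbc)
      _ ≤ f y := hanti ⟨hy.1, hyb.le⟩ (right_mem_Icc.mpr (hy.1.trans hyb.le)) hyb.le

/-- For `p ≥ 3`, the function `h a = a^p + (1-a)^(p-1)(a+p-1)` is strictly decreasing on
`(0,1/2)` and attains its minimum over `[0,1]` on the subinterval `[1/2,1]`. -/
theorem stmt_2 (p : ℝ) (hp : 3 ≤ p) :
    StrictAntiOn (fun a : ℝ => a ^ p + (1 - a) ^ (p - 1) * (a + p - 1))
      (Set.Ioo (0:ℝ) (1/2)) ∧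
    ∃ b ∈ Set.Icc (1/2:ℝ) 1, ∀ a ∈ Set.Icc (0:ℝ) 1,
      b ^ p + (1 - b) ^ (p - 1) * (b + p - 1) ≤
        a ^ p + (1 - a) ^ (p - 1) * (a + p - 1) := by
  have hanti := strictAntiOn_hFun hp
  obtain ⟨b, hb, hmin⟩ := exists_isMinOn_Icc_of_antitoneOn (c := 1) (by norm_num)
    (continuous_hFun (by linarith)).continuousOn hanti.antitoneOn
  exact ⟨hanti.mono Ioo_subset_Icc_self, b, hb, fun a ha => hmin ha⟩
end

section
/- For every real p ≥ 2 and every x ≥ 0, x^p - p·x + (p-1) ≥ (p-1)(1-x)². -/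
open Real

/-! Bernoulli's inequality `x ^ (p - 1) ≥ 1 + (p - 1) (x - 1)`, multiplied by `x`, bounds `x ^ p`
from below by a quadratic in `x`; the claimed inequality is exactly this bound rearranged. -/

lemma mul_one_add_mul_sub_one_le_rpow {p x : ℝ} (hp : 2 ≤ p) (hx : 0 ≤ x) :
    x * (1 + (p - 1) * (x - 1)) ≤ x ^ p := by
  have bernoulli : 1 + (p - 1) * (x - 1) ≤ x ^ (p - 1) := by
    simpa using one_add_mul_self_le_rpow_one_add (by linarith : (-1 : ℝ) ≤ x - 1)
      (by linarith : (1 : ℝ) ≤ p - 1)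
  calc x * (1 + (p - 1) * (x - 1)) ≤ x * x ^ (p - 1) := mul_le_mul_of_nonneg_left bernoulli hx
    _ = x ^ p := by
      rw [← rpow_one_add' hx (by linarith), add_sub_cancel]

/-- For every real `p ≥ 2` and `x ≥ 0`, `x^p - p x + (p-1) ≥ (p-1)(1-x)^2`. -/
theorem stmt_3 (p x : ℝ) (hp : 2 ≤ p) (hx : 0 ≤ x) :
    (p - 1) * (1 - x) ^ 2 ≤ x ^ p - p * x + (p - 1) := by
  linear_combination mul_one_add_mul_sub_one_le_rpow hp hx
end

section
/- For every real p ≥ 2 and every x ≥ 0, x^p + p·x + (p-1) ≥ (p/2)(1+x)². -/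
open Real

/-- Bernoulli's inequality applied to `x ^ p = (x ^ 2) ^ (p / 2)` with exponent `p / 2 ≥ 1`. -/
lemma one_add_half_mul_sq_sub_one_le_rpow {p x : ℝ} (hp : 2 ≤ p) (hx : 0 ≤ x) :
    1 + p / 2 * (x ^ 2 - 1) ≤ x ^ p := by
  have hsq : x ^ p = (1 + (x ^ 2 - 1)) ^ (p / 2) := by
    rw [add_sub_cancel, ← rpow_two, ← rpow_mul hx]
    ring_nf
  rw [hsq]
  exact one_add_mul_self_le_rpow_one_add (by linarith [sq_nonneg x]) (by linarith)

/-- For every real `p ≥ 2` and `x ≥ 0`, `x^p + p x + (p-1) ≥ (p/2)(1+x)^2`. -/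
theorem stmt_4 (p x : ℝ) (hp : 2 ≤ p) (hx : 0 ≤ x) :
    (p / 2) * (1 + x) ^ 2 ≤ x ^ p + p * x + (p - 1) := by
  linear_combination one_add_half_mul_sq_sub_one_le_rpow hp hx
end

section
/- For every real p ≥ 2 and all real numbers x, y, the weight w²(p,x,y) := p(p-1)∫₀¹ s|s·y + (1-s)·x|^{p-2} ds satisfies w²(p,x,y) ≥ (p/2)·|y|^{p-2}. -/
/-!
With `q = p - 2` the claim reads `|y|^q ≤ 2(q+1) ∫₀¹ s |s y + (1-s) x|^q ds`, and replacing `(x, y)`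
by `(-x, -y)` we may take `y ≥ 0`. If `x` and `y` have the same sign then `|s y + (1-s) x| ≥ s |y|`,
and integrating `s^(q+1) |y|^q` already suffices. Otherwise the segment vanishes at some
`t ∈ (0, 1)`, and after scaling the integral becomes `∫₀¹ s |s - t|^q ds`, which has a closed form;
the bound then follows from the tangent-line inequality for the convex function `u ↦ u^(q+1)` at
`u = 1 - t`. The bound is sharp at `x = -y`.
-/

open Real intervalIntegral

theorem tangent_le_rpow_add_one {a b q : ℝ} (ha : 0 ≤ a) (hb : 0 < b) (hq : 0 ≤ q) :
    b ^ q * ((q + 1) * a - q * b) ≤ a ^ (q + 1) := by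
  have bernoulli := one_add_mul_self_le_rpow_one_add
    (by linarith [div_nonneg ha hb.le] : -1 ≤ a / b - 1) (by linarith : 1 ≤ q + 1)
  rw [add_sub_cancel, div_rpow ha hb.le, le_div_iff₀ (by positivity), rpow_add_one hb.ne'] at bernoulli
  calc b ^ q * ((q + 1) * a - q * b) = (1 + (q + 1) * (a / b - 1)) * (b ^ q * b) := by
        field_simp; ring
    _ ≤ a ^ (q + 1) := bernoulli

theorem integral_affine_mul_rpow {a q : ℝ} (b c : ℝ) (ha : 0 ≤ a) (hq : 0 ≤ q) :
    ∫ u in (0:ℝ)..a, (b + c * u) * u ^ q = b * a ^ (q + 1) / (q + 1) + c * a ^ (q + 2) / (q + 2) := by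
  have hpow : ∀ u ∈ Set.uIcc 0 a, (b + c * u) * u ^ q = b * u ^ q + c * u ^ (q + 1) := by
    intro u hu
    rw [Set.uIcc_of_le ha] at hu
    rw [rpow_add_one' hu.1 (by linarith)]
    ring
  have hint : ∀ r : ℝ, 0 ≤ r → IntervalIntegrable (fun u : ℝ => u ^ r) MeasureTheory.volume 0 a :=
    fun r hr => (continuous_id.rpow_const fun _ => Or.inr hr).intervalIntegrable 0 a
  rw [integral_congr hpow, integral_add ((hint q hq).const_mul b) ((hint _ (by linarith)).const_mul c),
    integral_const_mul, integral_const_mul, integral_rpow (Or.inl (by linarith)),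
    integral_rpow (Or.inl (by linarith)), zero_rpow (by linarith), zero_rpow (by linarith)]
  ring_nf

theorem integral_mul_abs_sub_rpow {t q : ℝ} (ht0 : 0 ≤ t) (ht1 : t ≤ 1) (hq : 0 ≤ q) :
    (q + 1) * (q + 2) * ∫ s in (0:ℝ)..1, s * |s - t| ^ q =
      t ^ (q + 2) + (q + 1) * (1 - t) ^ (q + 2) + (q + 2) * t * (1 - t) ^ (q + 1) := by
  have hcont : Continuous fun s : ℝ => s * |s - t| ^ q := by
    fun_prop (disch := exact fun _ => Or.inr hq)
  have left : ∫ s in (0:ℝ)..t, s * |s - t| ^ q = ∫ u in (0:ℝ)..t, (t + -1 * u) * u ^ q := by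
    have h := integral_comp_sub_left (fun u => (t + -1 * u) * u ^ q) t (a := 0) (b := t)
    rw [sub_self, sub_zero] at h
    rw [← h]
    refine integral_congr fun s hs => ?_
    rw [Set.uIcc_of_le ht0] at hs
    simp only [abs_of_nonpos (sub_nonpos.2 hs.2), neg_sub]
    ring_nf
  have right : ∫ s in t..1, s * |s - t| ^ q = ∫ u in (0:ℝ)..1 - t, (t + 1 * u) * u ^ q := by
    have h := integral_comp_sub_right (fun u => (t + 1 * u) * u ^ q) t (a := t) (b := 1)
    rw [sub_self] at h
    rw [← h]
    refine integral_congr fun s hs => ?_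
    rw [Set.uIcc_of_le ht1] at hs
    simp only [abs_of_nonneg (sub_nonneg.2 hs.1)]
    ring_nf
  have ht : t ^ (q + 2) = t ^ (q + 1) * t := by
    rw [← rpow_add_one' ht0 (by linarith)]
    ring_nf
  rw [← integral_add_adjacent_intervals (hcont.intervalIntegrable 0 t) (hcont.intervalIntegrable t 1),
    left, right, integral_affine_mul_rpow _ _ ht0 hq, integral_affine_mul_rpow _ _ (by linarith) hq, ht]
  field_simp
  ring

theorem rpow_le_integral_mul_abs_sub_rpow {t q : ℝ} (ht0 : 0 ≤ t) (ht1 : t < 1) (hq : 0 ≤ q) :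
    (1 - t) ^ q ≤ 2 * (q + 1) * ∫ s in (0:ℝ)..1, s * |s - t| ^ q := by
  have hr : 0 < 1 - t := by linarith
  have tangent := tangent_le_rpow_add_one ht0 hr hq
  have hI := integral_mul_abs_sub_rpow ht0 ht1.le hq
  have ht2 : t ^ (q + 2) = t ^ (q + 1) * t := by rw [← rpow_add_one' ht0 (by linarith)]; ring_nf
  have hr1 : (1 - t) ^ (q + 1) = (1 - t) ^ q * (1 - t) := rpow_add_one' hr.le (by linarith)
  have hr2 : (1 - t) ^ (q + 2) = (1 - t) ^ q * (1 - t) ^ 2 := by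
    rw [← rpow_natCast, ← rpow_add hr]; norm_num
  have hR : 0 ≤ (1 - t) ^ q := rpow_nonneg hr.le q
  rw [ht2, hr1, hr2] at hI
  -- the closed form is at least `(1-t)^q (1 + q (t² + (1-t)²))`, and `t² + (1-t)² ≥ 1/2`
  nlinarith [mul_le_mul_of_nonneg_right tangent ht0, mul_nonneg (mul_nonneg hq hR) (sq_nonneg (1 - 2 * t))]

theorem abs_rpow_le_integral_lineMap_of_mul_nonneg {x y q : ℝ} (hxy : 0 ≤ x * y) (hq : 0 ≤ q) :
    |y| ^ q ≤ 2 * (q + 1) * ∫ s in (0:ℝ)..1, s * |s * y + (1 - s) * x| ^ q := by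
  have hpoint : ∀ s ∈ Set.Icc (0:ℝ) 1,
      (0 + |y| ^ q * s) * s ^ q ≤ s * |s * y + (1 - s) * x| ^ q := by
    intro s ⟨hs0, hs1⟩
    have hsy : s * |y| ≤ |s * y + (1 - s) * x| := by
      rw [← abs_of_nonneg hs0, ← abs_mul, abs_of_nonneg hs0, ← sq_le_sq]
      nlinarith [mul_nonneg (mul_nonneg hs0 (sub_nonneg.2 hs1)) hxy, sq_nonneg ((1 - s) * x)]
    calc (0 + |y| ^ q * s) * s ^ q = s * (s * |y|) ^ q := by
          rw [mul_rpow hs0 (abs_nonneg y)]; ring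
      _ ≤ s * |s * y + (1 - s) * x| ^ q := by gcongr
  have hmono := integral_mono_on (μ := MeasureTheory.volume) zero_le_one
    ((by fun_prop (disch := exact fun _ => Or.inr hq) :
      Continuous fun s : ℝ => (0 + |y| ^ q * s) * s ^ q).intervalIntegrable 0 1)
    ((by fun_prop (disch := exact fun _ => Or.inr hq) :
      Continuous fun s : ℝ => s * |s * y + (1 - s) * x| ^ q).intervalIntegrable 0 1)
    hpoint
  rw [integral_affine_mul_rpow _ _ zero_le_one hq, one_rpow, one_rpow, zero_mul, zero_div,
    zero_add, mul_one] at hmono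
  have hY : 0 ≤ |y| ^ q := rpow_nonneg (abs_nonneg y) q
  calc |y| ^ q ≤ 2 * (q + 1) * (|y| ^ q / (q + 2)) := by
        rw [← mul_div_assoc, le_div_iff₀ (by linarith)]; nlinarith
    _ ≤ _ := by gcongr

theorem abs_rpow_le_integral_lineMap_of_neg_of_pos {x y q : ℝ} (hx : x < 0) (hy : 0 < y) (hq : 0 ≤ q) :
    |y| ^ q ≤ 2 * (q + 1) * ∫ s in (0:ℝ)..1, s * |s * y + (1 - s) * x| ^ q := by
  have hd : 0 < y - x := by linarith
  set t := -x / (y - x)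
  have hdt : (y - x) * t = -x := mul_div_cancel₀ _ hd.ne'
  have ht1 : t < 1 := by rw [div_lt_one hd]; linarith
  have hline : ∀ s, s * |s * y + (1 - s) * x| ^ q = (y - x) ^ q * (s * |s - t| ^ q) := fun s => by
    rw [show s * y + (1 - s) * x = (y - x) * (s - t) by rw [mul_sub, hdt]; ring,
      abs_mul, abs_of_pos hd, mul_rpow hd.le (abs_nonneg _)]
    ring
  have hy_eq : |y| ^ q = (y - x) ^ q * (1 - t) ^ q := by
    rw [abs_of_pos hy, ← mul_rpow hd.le (by linarith), mul_one_sub, hdt, sub_neg_eq_add, sub_add_cancel]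
  have key := rpow_le_integral_mul_abs_sub_rpow (div_nonneg (by linarith) hd.le) ht1 hq
  simp_rw [hline, integral_const_mul, hy_eq]
  calc (y - x) ^ q * (1 - t) ^ q
      ≤ (y - x) ^ q * (2 * (q + 1) * ∫ s in (0:ℝ)..1, s * |s - t| ^ q) := by gcongr
    _ = _ := by ring

theorem abs_rpow_le_integral_lineMap (x y : ℝ) {q : ℝ} (hq : 0 ≤ q) :
    |y| ^ q ≤ 2 * (q + 1) * ∫ s in (0:ℝ)..1, s * |s * y + (1 - s) * x| ^ q := by
  wlog hy : 0 ≤ y generalizing x y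
  · have hneg : ∀ s : ℝ, |s * -y + (1 - s) * -x| = |s * y + (1 - s) * x| := fun s => by
      rw [← abs_neg]; ring_nf
    simpa only [hneg, abs_neg] using this (-x) (-y) (by linarith)
  rcases le_or_gt 0 (x * y) with hxy | hxy
  · exact abs_rpow_le_integral_lineMap_of_mul_nonneg hxy hq
  · have hy0 : 0 < y := hy.lt_of_ne (by rintro rfl; simp at hxy)
    exact abs_rpow_le_integral_lineMap_of_neg_of_pos (by nlinarith) hy0 hq

/-- For every real `p ≥ 2` and all real `x, y`,
`p(p-1) ∫₀¹ s |s y + (1-s) x|^(p-2) ds ≥ (p/2) |y|^(p-2)`. -/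
theorem stmt_5 (p x y : ℝ) (hp : 2 ≤ p) :
    (p / 2) * |y| ^ (p - 2) ≤
      p * (p - 1) * ∫ s in (0:ℝ)..1, s * |s * y + (1 - s) * x| ^ (p - 2) := by
  have h := abs_rpow_le_integral_lineMap x y (sub_nonneg.2 hp)
  rw [show p - 2 + 1 = p - 1 by ring] at h
  calc p / 2 * |y| ^ (p - 2) ≤ p / 2 * (2 * (p - 1) * _) := by gcongr
    _ = _ := by ring
end

section
/- For p ≥ 3, the constant λ_p := min_{a∈[0,1]} (a^p + (1-a)^{p-1}(a+p-1)) satisfies 1/2^p ≤ λ_p ≤ p/2^{p-1}. -/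
/-! Taking `a = 1/2` gives the upper bound. For the lower bound, either `a ≥ 1/2`, and then the
first term alone is at least `(1/2)^p`, or `a ≤ 1/2`, and then `(1-a)^(p-1) ≥ (1/2)^(p-1)` while
`a + p - 1 ≥ 1/2`. -/

open Real Set

namespace LambdaP

noncomputable def h (p a : ℝ) : ℝ := a ^ p + (1 - a) ^ (p - 1) * (a + p - 1)

lemma one_div_two_rpow (x : ℝ) : 1 / (2 : ℝ) ^ x = (1 / 2) ^ x := by
  rw [div_rpow zero_le_one zero_le_two, one_rpow]

lemma half_rpow_eq (p : ℝ) : (1 / 2 : ℝ) ^ p = (1 / 2) ^ (p - 1) * (1 / 2) := by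
  rw [← rpow_add_one (by norm_num), sub_add_cancel]

lemma h_half (p : ℝ) : h p (1 / 2) = p / 2 ^ (p - 1) := by
  rw [h, half_rpow_eq, div_eq_mul_one_div p, one_div_two_rpow,
    show (1 : ℝ) - 1 / 2 = 1 / 2 by norm_num]
  ring

lemma one_div_two_rpow_le_h {p a : ℝ} (hp : 3 / 2 ≤ p) (ha : a ∈ Icc (0 : ℝ) 1) :
    1 / 2 ^ p ≤ h p a := by
  obtain ⟨ha0, ha1⟩ := ha
  rw [one_div_two_rpow, h]
  rcases le_total (1 / 2 : ℝ) a with hge | hle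
  · have hfirst : (1 / 2 : ℝ) ^ p ≤ a ^ p := rpow_le_rpow (by norm_num) hge (by linarith)
    have hsecond : 0 ≤ (1 - a) ^ (p - 1) * (a + p - 1) :=
      mul_nonneg (rpow_nonneg (by linarith) _) (by linarith)
    linarith
  · have hbase : (1 / 2 : ℝ) ^ (p - 1) ≤ (1 - a) ^ (p - 1) :=
      rpow_le_rpow (by norm_num) (by linarith) (by linarith)
    calc (1 / 2 : ℝ) ^ p = (1 / 2) ^ (p - 1) * (1 / 2) := half_rpow_eq p
      _ ≤ (1 - a) ^ (p - 1) * (a + p - 1) :=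
          mul_le_mul hbase (by linarith) (by norm_num) (rpow_nonneg (by linarith) _)
      _ ≤ a ^ p + (1 - a) ^ (p - 1) * (a + p - 1) := le_add_of_nonneg_left (rpow_nonneg ha0 _)

end LambdaP

open LambdaP in
/-- For `p ≥ 3`, `λ_p := min_{a ∈ [0,1]} (a^p + (1-a)^(p-1)(a+p-1))`
satisfies `1/2^p ≤ λ_p ≤ p/2^(p-1)`. -/
theorem stmt_7 (p : ℝ) (hp : 3 ≤ p) :
    sInf ((fun a : ℝ => a ^ p + (1 - a) ^ (p - 1) * (a + p - 1)) '' Set.Icc 0 1) ∈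
      Set.Icc (1 / 2 ^ p) (p / 2 ^ (p - 1)) := by
  change sInf (h p '' Icc 0 1) ∈ Icc (1 / 2 ^ p) (p / 2 ^ (p - 1))
  have hlower : ∀ y ∈ h p '' Icc 0 1, 1 / 2 ^ p ≤ y := by
    rintro _ ⟨a, ha, rfl⟩
    exact one_div_two_rpow_le_h (by linarith) ha
  have hhalf : h p (1 / 2) ∈ h p '' Icc 0 1 := mem_image_of_mem _ ⟨by norm_num, by norm_num⟩
  refine ⟨le_csInf ⟨_, hhalf⟩ hlower, ?_⟩
  rw [← h_half p]
  exact csInf_le ⟨_, hlower⟩ hhalf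
end

section
/- Let p ≥ 2, let D be a measurable set, and let f, g ∈ L^p(D). Define w(p,f,g)² = p(p-1)∫₀¹ s|s·g + (1-s)·f|^{p-2} ds pointwise. Then ∫_D w(p,f,g)²·(f-g)² dx = ‖f‖_{L^p}^p + (p-1)‖g‖_{L^p}^p - p∫_D |g|^{p-2} g · f dx. -/
/-!
Pointwise, the integrand is the integral form of the Taylor remainder of `φ(y) = |y|^p` at `g`
in direction `f - g`,
`φ(f) - φ(g) - φ'(g)(f - g) = (f - g)² ∫₀¹ (1-t) φ''(g + t(f-g)) dt`,
with `φ' y = p|y|^(p-2) y` and `φ'' y = p(p-1)|y|^(p-2)`; the substitution `t = 1 - s` turns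
the integral into `w²`. Integrating over `D` is legitimate because
`|g|^(p-1)|f| ≤ |f|^p + |g|^p`.
-/

open MeasureTheory Real Filter Topology

theorem hasDerivAt_abs_rpow_mul_self {q : ℝ} (hq : 0 ≤ q) (x : ℝ) :
    HasDerivAt (fun y : ℝ => |y| ^ q * y) ((q + 1) * |x| ^ q) x := by
  rcases eq_or_ne x 0 with rfl | hx
  · rcases hq.eq_or_lt with rfl | hq
    · simpa using hasDerivAt_id' (0 : ℝ)
    rw [hasDerivAt_iff_isLittleO]
    have hsmall : Tendsto (fun y : ℝ => |y| ^ q) (𝓝 0) (𝓝 0) := by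
      simpa [zero_rpow hq.ne'] using
        (continuous_abs.continuousAt (x := (0 : ℝ))).rpow_const (Or.inr hq.le) |>.tendsto
    simpa [zero_rpow hq.ne'] using
      (Asymptotics.isLittleO_one_iff ℝ).mpr hsmall |>.mul_isBigO (Asymptotics.isBigO_refl id _)
  · have h := ((hasDerivAt_abs hx).rpow_const (p := q) (Or.inl (abs_ne_zero.mpr hx))).mul
      (hasDerivAt_id' x)
    refine h.congr_deriv ?_
    rw [rpow_sub_one (abs_ne_zero.mpr hx)]
    field_simp
    rw [mul_right_comm, sign_mul_self]
    ring

theorem abs_rpow_sub_two_mul_self_mul_self {p : ℝ} (hp : p ≠ 0) (y : ℝ) :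
    |y| ^ (p - 2) * y * y = |y| ^ p := by
  rw [mul_assoc, ← abs_mul_abs_self, ← sq, ← rpow_two,
    ← rpow_add' (abs_nonneg y) (by simpa), sub_add_cancel]

theorem taylor_integral_remainder_one {φ φ' φ'' : ℝ → ℝ}
    (hφ : ∀ x, HasDerivAt φ (φ' x) x) (hφ' : ∀ x, HasDerivAt φ' (φ'' x) x)
    (hφ'' : Continuous φ'') (a b : ℝ) :
    φ b - φ a - φ' a * (b - a) =
      (∫ t in (0:ℝ)..1, (1 - t) * φ'' (a + t * (b - a))) * (b - a) ^ 2 := by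
  set c : ℝ → ℝ := fun t => a + t * (b - a)
  have hc : ∀ t, HasDerivAt c (b - a) t := fun t => by
    simpa only [one_mul] using ((hasDerivAt_id' t).mul_const (b - a)).const_add a
  have hF : ∀ t ∈ Set.uIcc (0:ℝ) 1,
      HasDerivAt (fun t => φ (c t) + (1 - t) * φ' (c t) * (b - a))
        ((1 - t) * φ'' (c t) * (b - a) ^ 2) t := fun t _ => by
    have := ((hφ (c t)).comp t (hc t)).add
      ((((hasDerivAt_id' t).const_sub 1).mul ((hφ' (c t)).comp t (hc t))).mul_const (b - a))
    refine this.congr_deriv ?_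
    simp only [Function.comp_apply]
    ring
  rw [← intervalIntegral.integral_mul_const, intervalIntegral.integral_eq_sub_of_hasDerivAt hF
    ((by fun_prop : Continuous fun t => (1 - t) * φ'' (c t) * (b - a) ^ 2).intervalIntegrable _ _)]
  simp only [c, one_mul, add_sub_cancel, sub_self, zero_mul, add_zero, sub_zero]
  ring

theorem abs_rpow_taylor_remainder {p : ℝ} (hp : 2 ≤ p) (a b : ℝ) :
    (p * (p - 1) * ∫ s in (0:ℝ)..1, s * |s * b + (1 - s) * a| ^ (p - 2)) * (a - b) ^ 2
      = |a| ^ p + (p - 1) * |b| ^ p - p * (|b| ^ (p - 2) * b * a) := by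
  have hφ' (x : ℝ) :
      HasDerivAt (fun y => p * |y| ^ (p - 2) * y) (p * ((p - 1) * |x| ^ (p - 2))) x := by
    have := (hasDerivAt_abs_rpow_mul_self (q := p - 2) (by linarith) x).const_mul p
    simp only [← mul_assoc] at this ⊢
    exact this.congr_deriv (by ring)
  have hφ'' : Continuous fun y : ℝ => p * ((p - 1) * |y| ^ (p - 2)) := by
    have := (continuous_rpow_const (q := p - 2) (by linarith)).comp continuous_abs
    fun_prop
  have htaylor := taylor_integral_remainder_one (fun x => hasDerivAt_abs_rpow x (by linarith))
    hφ' hφ'' b a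
  have hflip : ∫ s in (0:ℝ)..1, s * |s * b + (1 - s) * a| ^ (p - 2)
      = ∫ t in (0:ℝ)..1, (1 - t) * |b + t * (a - b)| ^ (p - 2) := by
    have h := intervalIntegral.integral_comp_sub_left (a := 0) (b := 1)
      (fun t => (1 - t) * |b + t * (a - b)| ^ (p - 2)) 1
    rw [sub_self, sub_zero] at h
    rw [← h]
    refine intervalIntegral.integral_congr fun s _ => ?_
    ring_nf
  have hconst : ∫ t in (0:ℝ)..1, (1 - t) * (p * ((p - 1) * |b + t * (a - b)| ^ (p - 2)))
      = p * (p - 1) * ∫ t in (0:ℝ)..1, (1 - t) * |b + t * (a - b)| ^ (p - 2) := by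
    rw [← intervalIntegral.integral_const_mul]
    refine intervalIntegral.integral_congr fun t _ => ?_
    ring
  rw [hflip, ← hconst, ← htaylor, ← abs_rpow_sub_two_mul_self_mul_self (by linarith) b]
  ring

theorem abs_abs_rpow_sub_two_mul_mul_le {p : ℝ} (hp : 2 ≤ p) (a b : ℝ) :
    |(|b| ^ (p - 2) * b * a)| ≤ |a| ^ p + |b| ^ p := by
  set m := max |a| |b| with hm_def
  have hm : 0 ≤ m := le_max_of_le_left (abs_nonneg a)
  have ham : |a| ≤ m := le_max_left _ _
  have hbm : |b| ≤ m := le_max_right _ _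
  calc |(|b| ^ (p - 2) * b * a)| = |b| ^ (p - 2) * |b| * |a| := by
        rw [abs_mul, abs_mul, abs_of_nonneg (by positivity)]
    _ ≤ m ^ (p - 2) * m * m := by gcongr
    _ = m ^ p := by
        simpa [abs_of_nonneg hm] using abs_rpow_sub_two_mul_self_mul_self (by linarith) m
    _ ≤ |a| ^ p + |b| ^ p := by
        rcases max_cases |a| |b| with ⟨h, _⟩ | ⟨h, _⟩ <;> rw [hm_def, h]
        · exact le_add_of_nonneg_right (by positivity)
        · exact le_add_of_nonneg_left (by positivity)

section

variable {α : Type*} [MeasurableSpace α] {μ : Measure α} {f g : α → ℝ} {p : ℝ}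

theorem MeasureTheory.MemLp.integrable_abs_rpow (hp : 0 < p)
    (hf : MemLp f (ENNReal.ofReal p) μ) :
    Integrable (fun x => |f x| ^ p) μ := by
  simpa [ENNReal.toReal_ofReal hp.le] using
    hf.integrable_norm_rpow (by simpa using hp) ENNReal.ofReal_ne_top

theorem MeasureTheory.MemLp.integrable_abs_rpow_sub_two_mul_mul (hp : 2 ≤ p)
    (hf : MemLp f (ENNReal.ofReal p) μ) (hg : MemLp g (ENNReal.ofReal p) μ) :
    Integrable (fun x => |g x| ^ (p - 2) * g x * f x) μ := by
  refine ((hf.integrable_abs_rpow (by linarith)).add (hg.integrable_abs_rpow (by linarith))).mono'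
    ?_ (ae_of_all _ fun x => abs_abs_rpow_sub_two_mul_mul_le hp (f x) (g x))
  have := hf.1.aemeasurable
  have := hg.1.aemeasurable
  exact AEMeasurable.aestronglyMeasurable (by fun_prop)

end

theorem stmt_9_general (N : ℕ) (D : Set (Fin N → ℝ))
    (p : ℝ) (hp : 2 ≤ p) (f g : (Fin N → ℝ) → ℝ)
    (hf : MemLp f (ENNReal.ofReal p) (volume.restrict D))
    (hg : MemLp g (ENNReal.ofReal p) (volume.restrict D)) :
    ∫ x in D,
        (p * (p - 1) * ∫ s in (0:ℝ)..1, s * |s * g x + (1 - s) * f x| ^ (p - 2)) *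
          (f x - g x) ^ 2 =
      (∫ x in D, |f x| ^ p) + (p - 1) * (∫ x in D, |g x| ^ p) -
        p * ∫ x in D, |g x| ^ (p - 2) * g x * f x := by
  have hfp := hf.integrable_abs_rpow (by linarith)
  have hgp := hg.integrable_abs_rpow (by linarith)
  have hgf := hf.integrable_abs_rpow_sub_two_mul_mul hp hg
  have hsum : Integrable (fun x => |f x| ^ p + (p - 1) * |g x| ^ p) (volume.restrict D) :=
    hfp.add (hgp.const_mul _)
  simp_rw [abs_rpow_taylor_remainder hp]
  rw [integral_sub hsum (hgf.const_mul _), integral_add hfp (hgp.const_mul _),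
    integral_const_mul, integral_const_mul]

/-- The `L^p` identity: with `w(p,f,g)² = p(p-1)∫₀¹ s |s g + (1-s) f|^(p-2) ds` pointwise,
`∫_D w² (f-g)² = ‖f‖_p^p + (p-1)‖g‖_p^p - p ∫_D |g|^(p-2) g f`. -/
theorem stmt_9 (N : ℕ) (D : Set (Fin N → ℝ)) (hD : MeasurableSet D)
    (p : ℝ) (hp : 2 ≤ p) (f g : (Fin N → ℝ) → ℝ)
    (hf : MemLp f (ENNReal.ofReal p) (volume.restrict D))
    (hg : MemLp g (ENNReal.ofReal p) (volume.restrict D)) :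
    ∫ x in D,
        (p * (p - 1) * ∫ s in (0:ℝ)..1, s * |s * g x + (1 - s) * f x| ^ (p - 2)) *
          (f x - g x) ^ 2 =
      (∫ x in D, |f x| ^ p) + (p - 1) * (∫ x in D, |g x| ^ p) -
        p * ∫ x in D, |g x| ^ (p - 2) * g x * f x :=
  stmt_9_general N D p hp f g hf hg
end

section
/- For p ≥ 2, the first zero ν₁(p) of the solution φ of (|φ'|^{p-2}φ')' + |φ|^{p-2}φ = 0, φ(0)=1, φ'(0)=0, equals (p-1)^{1/p}·π/(p·sin(π/p)). -/
open Real

/-!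
The energy `(p - 1) |φ'| ^ p + |φ| ^ p` is conserved, hence equal to `1`. While `φ` decreases
from `1` to its first zero this gives `φ' = -((1 - φ ^ p) / (p - 1)) ^ (1 / p)`, and separating
variables `t = (p - 1) ^ (1 / p) ∫_{φ t}^1 (1 - s ^ p) ^ (-1 / p) ds`. At the first zero the
substitution `u = s ^ p` turns this into `(p - 1) ^ (1 / p) B(1 / p, 1 - 1 / p) / p`, and
`B(a, 1 - a) = Γ(a) Γ(1 - a) = π / sin (π a)`.
-/

open Set MeasureTheory

lemma cpow_betaIntegrand_eq_ofReal {a u : ℝ} (hu : u ∈ Icc (0 : ℝ) 1) :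
    (u : ℂ) ^ ((a : ℂ) - 1) * (1 - (u : ℂ)) ^ (((1 - a : ℝ) : ℂ) - 1) =
      ((u ^ (a - 1) * (1 - u) ^ (-a) : ℝ) : ℂ) := by
  rw [Complex.ofReal_mul, Complex.ofReal_cpow hu.1, Complex.ofReal_cpow (by linarith [hu.2])]
  push_cast
  ring_nf

lemma integral_rpow_mul_one_sub_rpow {a : ℝ} (h0 : 0 < a) (h1 : a < 1) :
    ∫ u in (0 : ℝ)..1, u ^ (a - 1) * (1 - u) ^ (-a) = π / sin (π * a) := by
  have hB := Complex.Gamma_mul_Gamma_eq_betaIntegral (s := a) (t := ((1 - a : ℝ) : ℂ))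
    (by simpa using h0) (by simpa using h1)
  have hβ : Complex.betaIntegral a ((1 - a : ℝ) : ℂ) =
      ((∫ u in (0 : ℝ)..1, u ^ (a - 1) * (1 - u) ^ (-a) : ℝ) : ℂ) := by
    rw [Complex.betaIntegral, ← intervalIntegral.integral_ofReal]
    refine intervalIntegral.integral_congr fun u hu => ?_
    rw [uIcc_of_le zero_le_one] at hu
    exact cpow_betaIntegrand_eq_ofReal hu
  rw [hβ, show (a : ℂ) + ((1 - a : ℝ) : ℂ) = 1 by push_cast; ring, Complex.Gamma_one, one_mul,
    Complex.Gamma_ofReal, Complex.Gamma_ofReal, ← Complex.ofReal_mul, Complex.ofReal_inj,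
    Real.Gamma_mul_Gamma_one_sub] at hB
  exact hB.symm

lemma intervalIntegrable_rpow_mul_one_sub_rpow {a : ℝ} (h0 : 0 < a) (h1 : a < 1) :
    IntervalIntegrable (fun u : ℝ => u ^ (a - 1) * (1 - u) ^ (-a)) volume 0 1 := by
  refine intervalIntegral.intervalIntegrable_of_integral_ne_zero ?_
  rw [integral_rpow_mul_one_sub_rpow h0 h1]
  exact div_ne_zero pi_ne_zero (sin_pos_of_pos_of_lt_pi (by positivity) (by nlinarith [pi_pos])).ne'

lemma continuousAt_rpow_mul_one_sub_rpow (a : ℝ) {u : ℝ} (hu : u ∈ Ioo (0 : ℝ) 1) :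
    ContinuousAt (fun u : ℝ => u ^ (a - 1) * (1 - u) ^ (-a)) u :=
  (continuousAt_id.rpow_const (Or.inl hu.1.ne')).mul
    ((continuousAt_const.sub continuousAt_id).rpow_const (Or.inl (sub_pos.2 hu.2).ne'))

/-- `(p - 1) ^ (1 / p) * ∫ s in x..1, (1 - s ^ p) ^ (-1 / p)`, written after the substitution
`u = s ^ p`; it inverts `φ` on `[0, ν₁(p)]`. -/
noncomputable def arcPhi (p x : ℝ) : ℝ :=
  (p - 1) ^ (1 / p) / p * ∫ u in x ^ p..1, u ^ (1 / p - 1) * (1 - u) ^ (-(1 / p))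

section arcPhi

variable {p : ℝ}

lemma arcPhi_one (p : ℝ) : arcPhi p 1 = 0 := by
  rw [arcPhi, one_rpow, intervalIntegral.integral_same, mul_zero]

lemma arcPhi_zero (hp : 1 < p) :
    arcPhi p 0 = (p - 1) ^ (1 / p) * π / (p * sin (π / p)) := by
  have hp0 : 0 < p := by linarith
  rw [arcPhi, zero_rpow hp0.ne', integral_rpow_mul_one_sub_rpow (by positivity)
    ((div_lt_one hp0).2 hp), mul_one_div]
  field_simp

lemma intervalIntegrable_arcPhi_integrand (hp : 1 < p) {s t : ℝ} (hs : s ∈ Icc (0 : ℝ) 1)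
    (ht : t ∈ Icc (0 : ℝ) 1) :
    IntervalIntegrable (fun u : ℝ => u ^ (1 / p - 1) * (1 - u) ^ (-(1 / p))) volume s t :=
  (intervalIntegrable_rpow_mul_one_sub_rpow (by positivity) ((div_lt_one (by linarith)).2 hp)
    ).mono_set (by rw [uIcc_of_le zero_le_one]; exact uIcc_subset_Icc hs ht)

lemma rpow_mem_Icc_zero_one (hp : 0 < p) {x : ℝ} (hx : x ∈ Icc (0 : ℝ) 1) :
    x ^ p ∈ Icc (0 : ℝ) 1 :=
  ⟨rpow_nonneg hx.1 _, rpow_le_one hx.1 hx.2 hp.le⟩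

lemma continuousOn_arcPhi (hp : 1 < p) : ContinuousOn (arcPhi p) (Icc 0 1) := by
  have hprim : ContinuousOn (fun y => ∫ u in y..1, u ^ (1 / p - 1) * (1 - u) ^ (-(1 / p)))
      (Icc 0 1) := by
    have := intervalIntegral.continuousOn_primitive_interval_left
      ((intervalIntegrable_iff' (by finiteness)).1 (intervalIntegrable_arcPhi_integrand hp
        (left_mem_Icc.2 zero_le_one) (right_mem_Icc.2 zero_le_one)))
    rwa [uIcc_of_le zero_le_one] at this
  exact continuousOn_const.mul (hprim.comp (continuousOn_id.rpow_const fun _ _ => Or.inr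
    (by linarith)) fun x hx => rpow_mem_Icc_zero_one (by linarith) hx)

lemma hasDerivAt_arcPhi (hp : 1 < p) {x : ℝ} (hx : x ∈ Ioo (0 : ℝ) 1) :
    HasDerivAt (arcPhi p) (-((p - 1) ^ (1 / p) * (1 - x ^ p) ^ (-(1 / p)))) x := by
  have hp0 : 0 < p := by linarith
  have hxp : x ^ p ∈ Ioo (0 : ℝ) 1 := ⟨rpow_pos_of_pos hx.1 _, rpow_lt_one hx.1.le hx.2 hp0⟩
  have hprim := intervalIntegral.integral_hasDerivAt_left
    (intervalIntegrable_arcPhi_integrand hp (Ioo_subset_Icc_self hxp) (right_mem_Icc.2 zero_le_one))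
    (ContinuousAt.stronglyMeasurableAtFilter isOpen_Ioo
      (fun u hu => continuousAt_rpow_mul_one_sub_rpow (1 / p) hu) _ hxp)
    (continuousAt_rpow_mul_one_sub_rpow (1 / p) hxp)
  refine ((hprim.comp x (hasDerivAt_rpow_const (Or.inl hx.1.ne'))).const_mul
    ((p - 1) ^ (1 / p) / p)).congr_deriv ?_
  have hcancel : (x ^ p) ^ (1 / p - 1) * x ^ (p - 1) = 1 := by
    rw [← rpow_mul hx.1.le, ← rpow_add hx.1, show p * (1 / p - 1) + (p - 1) = 0 by field_simp; ring,
      rpow_zero]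
  have hpp : p * p⁻¹ = 1 := mul_inv_cancel₀ hp0.ne'
  set C := (p - 1) ^ (1 / p)
  set B := (1 - x ^ p) ^ (-(1 / p))
  rw [div_eq_mul_inv]
  linear_combination (-C * B * p * p⁻¹) * hcancel + (-C * B) * hpp

lemma arcPhi_le_arcPhi_zero (hp : 1 < p) {x : ℝ} (hx : x ∈ Icc (0 : ℝ) 1) :
    arcPhi p x ≤ arcPhi p 0 := by
  have hxp := rpow_mem_Icc_zero_one (by linarith) hx
  have hsplit := intervalIntegral.integral_add_adjacent_intervals
    (intervalIntegrable_arcPhi_integrand hp (left_mem_Icc.2 zero_le_one) hxp)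
    (intervalIntegrable_arcPhi_integrand hp hxp (right_mem_Icc.2 zero_le_one))
  have hinit : 0 ≤ ∫ u in (0 : ℝ)..x ^ p, u ^ (1 / p - 1) * (1 - u) ^ (-(1 / p)) :=
    intervalIntegral.integral_nonneg hxp.1 fun u hu =>
      mul_nonneg (rpow_nonneg hu.1 _) (rpow_nonneg (by linarith [hu.2, hxp.2]) _)
  rw [arcPhi, arcPhi, zero_rpow (by linarith), ← hsplit]
  exact mul_le_mul_of_nonneg_left (by linarith)
    (div_nonneg (rpow_nonneg (by linarith) _) (by linarith))

lemma hasDerivAt_arcPhi_comp (hp : 1 < p) {f : ℝ → ℝ} {y t : ℝ} (hf : HasDerivAt f y t)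
    (hft : 0 < f t) (hy : y < 0) (hE : (p - 1) * |y| ^ p + |f t| ^ p = 1) :
    HasDerivAt (fun s => arcPhi p (f s)) 1 t := by
  have hp0 : 0 < p := by linarith
  have hy' : 0 < |y| := abs_pos.2 hy.ne
  rw [abs_of_pos hft] at hE
  have hgap : 1 - f t ^ p = (p - 1) * |y| ^ p := by linarith
  have hft1 : f t < 1 := by
    by_contra! h
    nlinarith [one_le_rpow h hp0.le, mul_pos (by linarith : 0 < p - 1) (rpow_pos_of_pos hy' p)]
  refine ((hasDerivAt_arcPhi hp ⟨hft, hft1⟩).comp t hf).congr_deriv ?_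
  rw [hgap, rpow_neg (by positivity), mul_rpow (by linarith) (by positivity),
    ← rpow_mul hy'.le, mul_one_div_cancel hp0.ne', rpow_one, abs_of_neg hy]
  have hC : 0 < (p - 1) ^ (1 / p) := rpow_pos_of_pos (by linarith) _
  field_simp [hy.ne, hC.ne']

end arcPhi

section signedPower

variable {p : ℝ}

lemma abs_abs_rpow_sub_two_mul_self (hp : 1 < p) (x : ℝ) :
    |(|x| ^ (p - 2) * x)| = |x| ^ (p - 1) := by
  rw [abs_mul, abs_of_nonneg (rpow_nonneg (abs_nonneg x) _),
    show p - 1 = p - 2 + 1 by ring, rpow_add_one' (abs_nonneg x) (by linarith)]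

lemma abs_abs_rpow_sub_two_mul_self_rpow_conj (hp : 1 < p) (x : ℝ) :
    |(|x| ^ (p - 2) * x)| ^ (p / (p - 1)) = |x| ^ p := by
  rw [abs_abs_rpow_sub_two_mul_self hp, ← rpow_mul (abs_nonneg x),
    mul_div_cancel₀ _ (by linarith : p - 1 ≠ 0)]

lemma abs_rpow_conj_sub_two_mul_abs_rpow_sub_two_mul_self (hp : 1 < p) (x : ℝ) :
    |(|x| ^ (p - 2) * x)| ^ (p / (p - 1) - 2) * (|x| ^ (p - 2) * x) = x := by
  rcases eq_or_ne x 0 with rfl | hx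
  · simp
  have hx' : 0 < |x| := abs_pos.2 hx
  have hp1 : p - 1 ≠ 0 := by linarith
  rw [abs_abs_rpow_sub_two_mul_self hp, ← rpow_mul hx'.le, ← mul_assoc, ← rpow_add hx',
    show (p - 1) * (p / (p - 1) - 2) + (p - 2) = 0 by field_simp; ring, rpow_zero, one_mul]

end signedPower

lemma pos_right_of_ne_zero_on_Ioc {f : ℝ → ℝ} {a b : ℝ} (hab : a ≤ b)
    (hf : ContinuousOn f (Icc a b)) (ha : 0 < f a) (hne : ∀ t ∈ Ioc a b, f t ≠ 0) : 0 < f b := by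
  by_contra! hb
  obtain ⟨t, ht, hft⟩ := intermediate_value_Icc' hab hf ⟨hb, ha.le⟩
  rcases ht.1.eq_or_lt with rfl | hat
  · exact ha.ne' hft
  · exact hne t ⟨hat, ht.2⟩ hft

structure IsPLaplaceIVPSolution (p : ℝ) (φ φ' ψ' : ℝ → ℝ) : Prop where
  hasDerivAt : ∀ r, 0 ≤ r → HasDerivAt φ (φ' r) r
  hasDerivAt_flux : ∀ r, 0 ≤ r → HasDerivAt (fun t => |φ' t| ^ (p - 2) * φ' t) (ψ' r) r
  ode : ∀ r, 0 ≤ r → ψ' r + |φ r| ^ (p - 2) * φ r = 0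
  initial_value : φ 0 = 1
  initial_slope : φ' 0 = 0

namespace IsPLaplaceIVPSolution

variable {p : ℝ} {φ φ' ψ' : ℝ → ℝ}

lemma continuousOn (hs : IsPLaplaceIVPSolution p φ φ' ψ') : ContinuousOn φ (Ici 0) :=
  fun r hr => (hs.hasDerivAt r hr).continuousAt.continuousWithinAt

/-- Differentiated as `(p - 1) |w| ^ q + |φ| ^ p` with `w = |φ'| ^ (p - 2) φ'` and
`q = p / (p - 1)`, since only `w` is known to be differentiable. -/
lemma energy_eq_one (hs : IsPLaplaceIVPSolution p φ φ' ψ') (hp : 1 < p) {r : ℝ} (hr : 0 ≤ r) :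
    (p - 1) * |φ' r| ^ p + |φ r| ^ p = 1 := by
  have hq : 1 < p / (p - 1) := by rw [lt_div_iff₀ (by linarith)]; linarith
  have hE : ∀ s ∈ Icc 0 r, HasDerivAt
      (fun t => (p - 1) * |(|φ' t| ^ (p - 2) * φ' t)| ^ (p / (p - 1)) + |φ t| ^ p) 0 s := by
    intro s hs'
    have hflux := ((hasDerivAt_abs_rpow _ hq).comp s (hs.hasDerivAt_flux s hs'.1)).const_mul
      (p - 1)
    refine (hflux.add ((hasDerivAt_abs_rpow _ hp).comp s (hs.hasDerivAt s hs'.1))).congr_deriv ?_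
    have hinv := abs_rpow_conj_sub_two_mul_abs_rpow_sub_two_mul_self hp (φ' s)
    have hode := hs.ode s hs'.1
    have hconj : (p - 1) * (p / (p - 1)) = p := mul_div_cancel₀ _ (by linarith)
    linear_combination ((p - 1) * (p / (p - 1)) * ψ' s) * hinv + (φ' s * ψ' s) * hconj +
      (p * φ' s) * hode
  have hconst := constant_of_has_deriv_right_zero
    (fun s hs' => (hE s hs').continuousAt.continuousWithinAt)
    (fun s hs' => (hE s (Ico_subset_Icc_self hs')).hasDerivWithinAt) r (right_mem_Icc.2 hr)
  simpa only [abs_abs_rpow_sub_two_mul_self_rpow_conj hp, hs.initial_value, hs.initial_slope,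
    abs_zero, abs_one, zero_rpow (by linarith : p ≠ 0), zero_rpow (zero_lt_one.trans hq).ne',
    one_rpow, mul_zero, zero_add] using hconst

lemma abs_le_one (hs : IsPLaplaceIVPSolution p φ φ' ψ') (hp : 1 < p) {r : ℝ} (hr : 0 ≤ r) :
    |φ r| ≤ 1 := by
  have hφ'p := rpow_nonneg (abs_nonneg (φ' r)) p
  rw [← rpow_le_rpow_iff (abs_nonneg _) zero_le_one (by linarith : 0 < p), one_rpow]
  nlinarith [hs.energy_eq_one hp hr]

/-- The flux `|φ'| ^ (p - 2) φ'` starts at `0` and decreases while `φ > 0`. -/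
lemma deriv_neg (hs : IsPLaplaceIVPSolution p φ φ' ψ') {r : ℝ} (hr : 0 < r)
    (hpos : ∀ s ∈ Icc 0 r, 0 < φ s) : φ' r < 0 := by
  have hanti : StrictAntiOn (fun t => |φ' t| ^ (p - 2) * φ' t) (Icc 0 r) := by
    refine strictAntiOn_of_hasDerivWithinAt_neg (convex_Icc 0 r)
      (fun s hs' => (hs.hasDerivAt_flux s hs'.1).continuousAt.continuousWithinAt)
      (fun s hs' => (hs.hasDerivAt_flux s (interior_subset hs').1).hasDerivWithinAt) ?_
    intro s hs'
    have hs'' := interior_subset hs'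
    rw [eq_neg_of_add_eq_zero_left (hs.ode s hs''.1), neg_neg_iff_pos]
    exact mul_pos (rpow_pos_of_pos (abs_pos.2 (hpos s hs'').ne') _) (hpos s hs'')
  have hflux := hanti (left_mem_Icc.2 hr.le) (right_mem_Icc.2 hr.le) hr
  simp only [hs.initial_slope, abs_zero, mul_zero] at hflux
  by_contra! h
  exact hflux.not_ge (mul_nonneg (rpow_nonneg (abs_nonneg _) _) h)

/-- Separation of variables: up to the first zero `R`, `t ↦ arcPhi p (φ t) - t` is constant. -/
lemma arcPhi_eq (hs : IsPLaplaceIVPSolution p φ φ' ψ') (hp : 1 < p) {R : ℝ} (hR : 0 < R)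
    (hpos : ∀ s ∈ Ico 0 R, 0 < φ s) : arcPhi p (φ R) = R := by
  have hφR : 0 ≤ φ R := by
    have hR_mem : R ∈ closure (Ico 0 R) := by rw [closure_Ico hR.ne]; exact right_mem_Icc.2 hR.le
    exact ContinuousWithinAt.closure_le hR_mem continuousWithinAt_const
      (hs.hasDerivAt R hR.le).continuousAt.continuousWithinAt fun s hs' => (hpos s hs').le
  have hmaps : MapsTo φ (Icc 0 R) (Icc 0 1) := fun s hs' =>
    ⟨(eq_or_lt_of_le hs'.2).elim (fun h => h ▸ hφR) fun h => (hpos s ⟨hs'.1, h⟩).le,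
      (le_abs_self _).trans (hs.abs_le_one hp hs'.1)⟩
  have hcont : ContinuousOn (fun s => arcPhi p (φ s) - s) (Icc 0 R) :=
    ((continuousOn_arcPhi hp).comp (hs.continuousOn.mono Icc_subset_Ici_self) hmaps).sub
      continuousOn_id
  have hderiv : ∀ t ∈ Ioo 0 R, HasDerivAt (fun s => arcPhi p (φ s) - s) 0 t := by
    intro t ht
    have hφt : ∀ s ∈ Icc 0 t, 0 < φ s := fun s hs' => hpos s ⟨hs'.1, hs'.2.trans_lt ht.2⟩
    have h := (hasDerivAt_arcPhi_comp hp (hs.hasDerivAt t ht.1.le)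
      (hφt t (right_mem_Icc.2 ht.1.le)) (hs.deriv_neg ht.1 hφt) (hs.energy_eq_one hp ht.1.le)).sub
      (hasDerivAt_id' t)
    rwa [sub_self] at h
  obtain ⟨c, -, hslope⟩ := exists_hasDerivAt_eq_slope _ _ hR hcont hderiv
  rw [hs.initial_value, arcPhi_one, eq_comm, div_eq_zero_iff] at hslope
  linarith [hslope.resolve_right (by linarith)]

lemma exists_zero (hs : IsPLaplaceIVPSolution p φ φ' ψ') (hp : 1 < p) : ∃ r, 0 < r ∧ φ r = 0 := by
  by_contra! hne
  have hR : 0 < arcPhi p 0 + 1 := by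
    linarith [arcPhi_le_arcPhi_zero hp (right_mem_Icc.2 zero_le_one), arcPhi_one p]
  have hpos : ∀ s, 0 ≤ s → 0 < φ s := fun s hs' =>
    pos_right_of_ne_zero_on_Ioc hs' (hs.continuousOn.mono Icc_subset_Ici_self)
      (by rw [hs.initial_value]; exact one_pos) fun t ht => hne t ht.1
  have hφR : φ (arcPhi p 0 + 1) ∈ Icc 0 1 :=
    ⟨(hpos _ hR.le).le, (le_abs_self _).trans (hs.abs_le_one hp hR.le)⟩
  have := arcPhi_le_arcPhi_zero hp hφR
  rw [hs.arcPhi_eq hp hR fun s hs' => hpos s hs'.1] at this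
  linarith

end IsPLaplaceIVPSolution

theorem stmt_11_general (p : ℝ) (hp : 2 ≤ p) (φ φ' ψ' : ℝ → ℝ)
    (hφ : ∀ r, 0 ≤ r → HasDerivAt φ (φ' r) r)
    (hψ : ∀ r, 0 ≤ r → HasDerivAt (fun t => |φ' t| ^ (p - 2) * φ' t) (ψ' r) r)
    (hode : ∀ r, 0 ≤ r → ψ' r + |φ r| ^ (p - 2) * φ r = 0)
    (h0 : φ 0 = 1) (h0' : φ' 0 = 0) :
    sInf {r : ℝ | 0 < r ∧ φ r = 0} =
      (p - 1) ^ (1 / p) * π / (p * Real.sin (π / p)) := by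
  have hp1 : 1 < p := by linarith
  have hs : IsPLaplaceIVPSolution p φ φ' ψ' := ⟨hφ, hψ, hode, h0, h0'⟩
  set Z := {r : ℝ | 0 < r ∧ φ r = 0}
  have hZ : Z = Ici 0 ∩ φ ⁻¹' {0} := by
    ext r
    refine ⟨fun hr => ⟨hr.1.le, hr.2⟩, fun hr => ⟨hr.1.lt_of_ne ?_, hr.2⟩⟩
    rintro rfl
    exact one_ne_zero (h0.symm.trans hr.2)
  have hbdd : BddBelow Z := ⟨0, fun r hr => hr.1.le⟩
  have hz : sInf Z ∈ Z := by
    refine IsClosed.csInf_mem ?_ (hs.exists_zero hp1) hbdd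
    rw [hZ]
    exact hs.continuousOn.preimage_isClosed_of_isClosed isClosed_Ici isClosed_singleton
  have hpos : ∀ s ∈ Ico 0 (sInf Z), 0 < φ s := fun s hs' =>
    pos_right_of_ne_zero_on_Ioc hs'.1 (hs.continuousOn.mono Icc_subset_Ici_self)
      (by rw [h0]; exact one_pos)
      fun t ht hφt => (csInf_le hbdd ⟨ht.1, hφt⟩).not_gt (ht.2.trans_lt hs'.2)
  rw [← hs.arcPhi_eq hp1 hz.1 hpos, hz.2, arcPhi_zero hp1]

/-- For `p ≥ 2`, the first zero of the solution `φ` of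
`(|φ'|^(p-2) φ')' + |φ|^(p-2) φ = 0`, `φ(0)=1`, `φ'(0)=0`, equals
`(p-1)^(1/p) π / (p sin(π/p))`. -/
theorem stmt_11 (p : ℝ) (hp : 2 ≤ p) (φ φ' ψ' : ℝ → ℝ)
    (hφ : ∀ r, 0 ≤ r → HasDerivAt φ (φ' r) r)
    (hφ'cont : ContinuousOn φ' (Set.Ici 0))
    (hψ : ∀ r, 0 ≤ r → HasDerivAt (fun t => |φ' t| ^ (p - 2) * φ' t) (ψ' r) r)
    (hψ'cont : ContinuousOn ψ' (Set.Ici 0))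
    (hode : ∀ r, 0 ≤ r → ψ' r + |φ r| ^ (p - 2) * φ r = 0)
    (h0 : φ 0 = 1) (h0' : φ' 0 = 0) :
    sInf {r : ℝ | 0 < r ∧ φ r = 0} =
      (p - 1) ^ (1 / p) * π / (p * Real.sin (π / p)) :=
  stmt_11_general p hp φ φ' ψ' hφ hψ hode h0 h0'
end

section
/- Let θ > 1, a > 0, λ > 0, and let h ∈ C¹[0,a] with r^{θ-1}|h'|^{p-2}h' ∈ C¹(0,a) solve (r^{θ-1}|h'|^{p-2}h')' + λ r^{θ-1}|h|^{p-2}h = 0 on (0,a). Then h'(0) = 0. -/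
open Real Set Filter Topology

/-!
Write `φ(x) = |x|^(p-2) x` and `G(r) = r^(θ-1) φ(h'(r))`. Since `h'` is bounded near `0` and
`θ > 1`, `G(r) → 0` as `r → 0⁺`. By the equation, `|G'(t)| ≤ |λ| M t^(θ-1) ≤ |λ| M r^(θ-1)` on
`(0, r]`, where `M` bounds `|φ ∘ h|`; the mean value theorem then gives `|G(r)| ≤ |λ| M r^θ`, that
is `|φ(h'(r))| ≤ |λ| M r`. Letting `r → 0⁺`, continuity of `h'` gives `φ(h'(0)) = 0`, so `h'(0) = 0`.
-/

theorem continuous_abs_rpow_mul_self {q : ℝ} (hq : 0 ≤ q) : Continuous fun x : ℝ => |x| ^ q * x :=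
  ((continuous_rpow_const hq).comp continuous_abs).mul continuous_id

theorem eq_zero_of_abs_rpow_mul_self_eq_zero {q x : ℝ} (h : |x| ^ q * x = 0) : x = 0 := by
  rcases mul_eq_zero.mp h with hx | hx
  · exact abs_eq_zero.mp ((rpow_eq_zero_iff_of_nonneg (abs_nonneg x)).mp hx).1
  · exact hx

theorem Filter.Tendsto.rpow_mul_nhdsGT_zero {f : ℝ → ℝ} {q L : ℝ} (hq : 0 < q)
    (hf : Tendsto f (𝓝[>] 0) (𝓝 L)) : Tendsto (fun t => t ^ q * f t) (𝓝[>] 0) (𝓝 0) := by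
  have hpow : Tendsto (fun t : ℝ => t ^ q) (𝓝[>] 0) (𝓝 0) := by
    simpa [zero_rpow hq.ne'] using
      tendsto_nhdsWithin_of_tendsto_nhds (continuousAt_rpow_const 0 q (Or.inr hq.le)).tendsto
  simpa using hpow.mul hf

theorem abs_le_mul_of_hasDerivAt_of_tendsto_nhdsGT_zero {G G' : ℝ → ℝ} {r K : ℝ}
    (hG : ∀ t ∈ Ioc 0 r, HasDerivAt G (G' t) t) (hG' : ∀ t ∈ Ioo 0 r, |G' t| ≤ K)
    (hG0 : Tendsto G (𝓝[>] 0) (𝓝 0)) (hr : 0 < r) : |G r| ≤ K * r := by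
  have hmvt : ∀ ε ∈ Ioo 0 r, |G r - G ε| ≤ K * (r - ε) := fun ε hε =>
    norm_image_sub_le_of_norm_deriv_le_segment'
      (fun t ht => (hG t ⟨hε.1.trans_le ht.1, ht.2⟩).hasDerivWithinAt)
      (fun t ht => hG' t ⟨hε.1.trans_le ht.1, ht.2⟩) r ⟨hε.2.le, le_rfl⟩
  have hlhs : Tendsto (fun ε => |G r - G ε|) (𝓝[>] 0) (𝓝 |G r - 0|) :=
    (tendsto_const_nhds.sub hG0).abs
  have hrhs : Tendsto (fun ε => K * (r - ε)) (𝓝[>] 0) (𝓝 (K * (r - 0))) :=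
    tendsto_nhdsWithin_of_tendsto_nhds ((continuous_const.mul (continuous_const.sub
      continuous_id)).tendsto 0)
  simpa using le_of_tendsto_of_tendsto hlhs hrhs
    (eventually_of_mem (Ioo_mem_nhdsGT hr) hmvt)

theorem tendsto_nhdsGT_zero_of_abs_le_mul {f : ℝ → ℝ} {a C : ℝ} (ha : 0 < a)
    (hf : ∀ r ∈ Ioo 0 a, |f r| ≤ C * r) : Tendsto f (𝓝[>] 0) (𝓝 0) :=
  squeeze_zero_norm' (eventually_of_mem (Ioo_mem_nhdsGT ha) hf)
    (((continuous_const_mul C).tendsto' 0 0 (mul_zero C)).mono_left nhdsWithin_le_nhds)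

theorem stmt_14_general (p θ a lam : ℝ) (hp : 2 ≤ p) (hθ : 1 < θ) (ha : 0 < a)
    (h h' g' : ℝ → ℝ)
    (hh : ∀ r ∈ Set.Icc 0 a, HasDerivWithinAt h (h' r) (Set.Icc 0 a) r)
    (hh'cont : ContinuousOn h' (Set.Icc 0 a))
    (hg : ∀ r ∈ Set.Ioo 0 a,
      HasDerivAt (fun t => t ^ (θ - 1) * (|h' t| ^ (p - 2) * h' t)) (g' r) r)
    (hode : ∀ r ∈ Set.Ioo 0 a, g' r + lam * r ^ (θ - 1) * (|h r| ^ (p - 2) * h r) = 0) :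
    h' 0 = 0 := by
  set φ : ℝ → ℝ := fun x => |x| ^ (p - 2) * x
  have hφ : Continuous φ := continuous_abs_rpow_mul_self (by linarith)
  have hh'0 : Tendsto h' (𝓝[>] 0) (𝓝 (h' 0)) :=
    ((hh'cont 0 ⟨le_rfl, ha.le⟩).mono_of_mem_nhdsWithin (Icc_mem_nhdsGT ha)).tendsto
  obtain ⟨M, hM⟩ : ∃ M, ∀ t ∈ Icc 0 a, |φ (h t)| ≤ M :=
    isCompact_Icc.exists_bound_of_continuousOn
      (hφ.comp_continuousOn fun t ht => (hh t ht).continuousWithinAt)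
  have hsmall : ∀ r ∈ Ioo 0 a, |φ (h' r)| ≤ |lam| * M * r := by
    intro r hr
    have hpos : 0 < r ^ (θ - 1) := rpow_pos_of_pos hr.1 _
    have hflux : |r ^ (θ - 1) * φ (h' r)| ≤ |lam| * r ^ (θ - 1) * M * r := by
      refine abs_le_mul_of_hasDerivAt_of_tendsto_nhdsGT_zero
        (fun t ht => hg t ⟨ht.1, ht.2.trans_lt hr.2⟩) (fun t ht => ?_)
        (((hφ.tendsto _).comp hh'0).rpow_mul_nhdsGT_zero (by linarith)) hr.1
      have hta : t ∈ Ioo 0 a := ⟨ht.1, ht.2.trans hr.2⟩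
      rw [eq_neg_of_add_eq_zero_left (hode t hta), abs_neg, abs_mul, abs_mul,
        abs_of_pos (rpow_pos_of_pos hta.1 _)]
      gcongr
      · exact hta.1.le
      · exact ht.2.le
      · exact hM t (Ioo_subset_Icc_self hta)
    rw [abs_mul, abs_of_pos hpos] at hflux
    exact le_of_mul_le_mul_left (by linarith) hpos
  exact eq_zero_of_abs_rpow_mul_self_eq_zero <| tendsto_nhds_unique ((hφ.tendsto _).comp hh'0)
    (tendsto_nhdsGT_zero_of_abs_le_mul ha hsmall)

/-- Let `θ > 1`, `a > 0`, `λ > 0`, and let `h ∈ C¹[0,a]` with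
`r^(θ-1)|h'|^(p-2) h' ∈ C¹(0,a)` solve `(r^(θ-1)|h'|^(p-2) h')' + λ r^(θ-1)|h|^(p-2) h = 0`
on `(0,a)`. Then `h'(0) = 0`. -/
theorem stmt_14 (p θ a lam : ℝ) (hp : 2 ≤ p) (hθ : 1 < θ) (ha : 0 < a) (hlam : 0 < lam)
    (h h' g' : ℝ → ℝ)
    (hh : ∀ r ∈ Set.Icc 0 a, HasDerivWithinAt h (h' r) (Set.Icc 0 a) r)
    (hh'cont : ContinuousOn h' (Set.Icc 0 a))
    (hg : ∀ r ∈ Set.Ioo 0 a,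
      HasDerivAt (fun t => t ^ (θ - 1) * (|h' t| ^ (p - 2) * h' t)) (g' r) r)
    (hg'cont : ContinuousOn g' (Set.Ioo 0 a))
    (hode : ∀ r ∈ Set.Ioo 0 a, g' r + lam * r ^ (θ - 1) * (|h r| ^ (p - 2) * h r) = 0) :
    h' 0 = 0 :=
  stmt_14_general p θ a lam hp hθ ha h h' g' hh hh'cont hg hode
end

section
/- Let p ≥ 2 and θ ≥ 1 and let φ be the solution on [0,∞) of (r^{θ-1}|φ'|^{p-2}φ')' + r^{θ-1}|φ|^{p-2}φ = 0 with φ(0)=1, φ'(0)=0. Then every zero of φ is simple: if φ(z₀)=0 then φ'(z₀) ≠ 0. -/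
/-!
With `S_p(s) = |s|^(p-2) s` (`signedPow p`), the energy `E = (p-1)/p |φ'|^p + 1/p |φ|^p`
satisfies `E' = -(θ-1)/r |φ'|^p` along the equation, so for `K = p(θ-1)/(p-1)` the damping term
cancels in `(r^K E)' = (θ-1)/(p-1) r^(K-1) |φ|^p ≥ 0`. If `φ(z₀) = φ'(z₀) = 0`, the nonnegative
nondecreasing function `r^K E` vanishes at `z₀`, hence on `(0, z₀]`, so `φ = 0` there,
contradicting `φ(0) = 1`.
-/

open Real Filter Set Topology

noncomputable def signedPow (p s : ℝ) : ℝ := |s| ^ (p - 2) * s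

section SignedPow

variable {p : ℝ}

lemma abs_signedPow (hp : p ≠ 1) (s : ℝ) : |signedPow p s| = |s| ^ (p - 1) := by
  rcases eq_or_ne s 0 with rfl | hs
  · simp [signedPow, zero_rpow (sub_ne_zero.mpr hp)]
  · rw [signedPow, abs_mul, abs_of_nonneg (rpow_nonneg (abs_nonneg s) _),
      ← rpow_add_one (abs_ne_zero.mpr hs)]
    ring_nf

lemma signedPow_mul_self (hp : p ≠ 0) (s : ℝ) : signedPow p s * s = |s| ^ p := by
  rcases eq_or_ne s 0 with rfl | hs
  · simp [signedPow, zero_rpow hp]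
  · have hs' : |s| ≠ 0 := abs_ne_zero.mpr hs
    rw [signedPow, mul_assoc, ← abs_mul_abs_self s, ← mul_assoc, ← rpow_add_one hs',
      ← rpow_add_one hs']
    ring_nf

lemma abs_signedPow_rpow_conj (hp : 1 < p) (s : ℝ) :
    |signedPow p s| ^ (p / (p - 1)) = |s| ^ p := by
  rw [abs_signedPow hp.ne', ← rpow_mul (abs_nonneg s), mul_div_cancel₀ _ (by linarith)]

lemma signedPow_conj_signedPow (hp : 1 < p) (s : ℝ) :
    signedPow (p / (p - 1)) (signedPow p s) = s := by
  rcases eq_or_ne s 0 with rfl | hs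
  · simp [signedPow]
  · have hs' : 0 < |s| := abs_pos.mpr hs
    rw [signedPow, abs_signedPow hp.ne', ← rpow_mul hs'.le, signedPow, ← mul_assoc,
      ← rpow_add hs']
    have : (p - 1) * (p / (p - 1) - 2) + (p - 2) = 0 := by
      field_simp [show p - 1 ≠ 0 by linarith]; ring
    rw [this, rpow_zero, one_mul]

/-- `|u|^p = |S_p u|^(p/(p-1))`, and `|x|^q` is `C¹` for `q > 1`: so `|u|^p` is differentiable
wherever the flux `S_p u` is, even where `u` itself is not. -/
lemma HasDerivAt.abs_rpow_of_signedPow {u : ℝ → ℝ} {c r : ℝ} (hp : 1 < p)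
    (h : HasDerivAt (fun t => signedPow p (u t)) c r) :
    HasDerivAt (fun t => |u t| ^ p) (p / (p - 1) * u r * c) r := by
  have hq : 1 < p / (p - 1) := (one_lt_div (by linarith)).mpr (by linarith)
  have := (hasDerivAt_abs_rpow (signedPow p (u r)) hq).comp r h
  simp only [Function.comp_def, abs_signedPow_rpow_conj hp] at this
  refine this.congr_deriv ?_
  rw [mul_assoc _ _ (signedPow p (u r)), ← signedPow, signedPow_conj_signedPow hp]

end SignedPow

lemma HasDerivAt.of_rpow_mul {f : ℝ → ℝ} {a c r : ℝ} (hr : 0 < r)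
    (h : HasDerivAt (fun t => t ^ a * f t) c r) :
    HasDerivAt f (r ^ (-a) * c - a / r * f r) r := by
  have hf : f =ᶠ[nhds r] fun t => t ^ (-a) * (t ^ a * f t) := by
    filter_upwards [eventually_gt_nhds hr] with t ht
    rw [← mul_assoc, ← rpow_add ht, neg_add_cancel, rpow_zero, one_mul]
  refine (((hasDerivAt_rpow_const (p := -a) (Or.inl hr.ne')).mul h).congr_of_eventuallyEq
    hf).congr_deriv ?_
  have hinv : r ^ (-a) * r ^ a = 1 := by rw [← rpow_add hr, neg_add_cancel, rpow_zero]
  calc -a * r ^ (-a - 1) * (r ^ a * f r) + r ^ (-a) * c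
      = -a * (r ^ (-a) * r ^ a) * f r / r + r ^ (-a) * c := by rw [rpow_sub_one hr.ne']; ring
    _ = r ^ (-a) * c - a / r * f r := by rw [hinv]; ring

noncomputable def pEnergy (p : ℝ) (φ φ' : ℝ → ℝ) (r : ℝ) : ℝ :=
  (p - 1) / p * |φ' r| ^ p + 1 / p * |φ r| ^ p

section RadialPLaplace

variable {p θ : ℝ} {φ φ' : ℝ → ℝ} {r : ℝ}

lemma hasDerivAt_pEnergy (hp : 1 < p) (hr : 0 < r) (hφ : HasDerivAt φ (φ' r) r)
    (hflux : HasDerivAt (fun t => t ^ (θ - 1) * signedPow p (φ' t))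
      (-(r ^ (θ - 1) * signedPow p (φ r))) r) :
    HasDerivAt (pEnergy p φ φ') (-((θ - 1) / r * |φ' r| ^ p)) r := by
  have hψ := hflux.of_rpow_mul hr
  rw [mul_neg, ← mul_assoc, ← rpow_add hr, neg_add_cancel, rpow_zero, one_mul] at hψ
  have hφp := (hasDerivAt_abs_rpow (φ r) hp).comp r hφ
  refine ((hψ.abs_rpow_of_signedPow hp).const_mul ((p - 1) / p) |>.add
    (hφp.const_mul (1 / p))).congr_deriv ?_
  rw [← signedPow_mul_self (by linarith) (φ' r)]
  simp only [signedPow]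
  field_simp [show p - 1 ≠ 0 by linarith]
  ring

lemma hasDerivAt_rpow_mul_pEnergy (hp : 1 < p) (hr : 0 < r) (hφ : HasDerivAt φ (φ' r) r)
    (hflux : HasDerivAt (fun t => t ^ (θ - 1) * signedPow p (φ' t))
      (-(r ^ (θ - 1) * signedPow p (φ r))) r) :
    HasDerivAt (fun t => t ^ (p * (θ - 1) / (p - 1)) * pEnergy p φ φ' t)
      ((θ - 1) / (p - 1) * r ^ (p * (θ - 1) / (p - 1) - 1) * |φ r| ^ p) r := by
  refine ((hasDerivAt_rpow_const (p := p * (θ - 1) / (p - 1)) (Or.inl hr.ne')).mul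
    (hasDerivAt_pEnergy hp hr hφ hflux)).congr_deriv ?_
  rw [rpow_sub_one hr.ne', pEnergy]
  field_simp [show p - 1 ≠ 0 by linarith]
  ring

lemma pEnergy_nonneg (hp : 1 < p) (r : ℝ) : 0 ≤ pEnergy p φ φ' r := by
  have : 0 ≤ p - 1 := by linarith
  unfold pEnergy
  positivity

lemma eq_zero_of_pEnergy_eq_zero (hp : 1 < p) (h : pEnergy p φ φ' r = 0) : φ r = 0 := by
  have hkin : 0 ≤ (p - 1) / p * |φ' r| ^ p := by
    have : 0 ≤ p - 1 := by linarith
    positivity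
  have hpot : 1 / p * |φ r| ^ p = 0 :=
    le_antisymm (by unfold pEnergy at h; linarith) (by positivity)
  simpa [(by linarith : p ≠ 0), rpow_eq_zero_iff_of_nonneg] using hpot

lemma monotoneOn_rpow_mul_pEnergy (hp : 1 < p) (hθ : 1 ≤ θ)
    (hφ : ∀ r, 0 < r → HasDerivAt φ (φ' r) r)
    (hflux : ∀ r, 0 < r → HasDerivAt (fun t => t ^ (θ - 1) * signedPow p (φ' t))
      (-(r ^ (θ - 1) * signedPow p (φ r))) r) :
    MonotoneOn (fun t => t ^ (p * (θ - 1) / (p - 1)) * pEnergy p φ φ' t) (Ioi 0) := by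
  have hV r (hr : r ∈ Ioi (0 : ℝ)) := hasDerivAt_rpow_mul_pEnergy hp hr (hφ r hr) (hflux r hr)
  refine monotoneOn_of_hasDerivWithinAt_nonneg (convex_Ioi 0)
    (fun r hr => (hV r hr).continuousAt.continuousWithinAt)
    (fun r hr => (hV r (interior_subset hr)).hasDerivWithinAt) fun r hr => ?_
  have : 0 ≤ p - 1 := by linarith
  have : 0 ≤ θ - 1 := by linarith
  have : 0 < r := interior_subset hr
  positivity

end RadialPLaplace

theorem stmt_15_general (p θ : ℝ) (hp : 2 ≤ p) (hθ : 1 ≤ θ) (φ φ' g' : ℝ → ℝ)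
    (hφ : ∀ r, 0 ≤ r → HasDerivAt φ (φ' r) r)
    (hg : ∀ r, 0 ≤ r →
      HasDerivAt (fun t => t ^ (θ - 1) * (|φ' t| ^ (p - 2) * φ' t)) (g' r) r)
    (hode : ∀ r, 0 ≤ r → g' r + r ^ (θ - 1) * (|φ r| ^ (p - 2) * φ r) = 0)
    (h0 : φ 0 = 1) :
    ∀ z₀, 0 ≤ z₀ → φ z₀ = 0 → φ' z₀ ≠ 0 := by
  intro z₀ hz₀ hφz hφ'z
  have hp1 : 1 < p := by linarith
  have hz₀pos : 0 < z₀ := hz₀.lt_of_ne (by rintro rfl; simp [h0] at hφz)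
  have hflux r (hr : 0 < r) : HasDerivAt (fun t => t ^ (θ - 1) * signedPow p (φ' t))
      (-(r ^ (θ - 1) * signedPow p (φ r))) r := by
    have h := hg r hr.le
    rwa [eq_neg_of_add_eq_zero_left (hode r hr.le)] at h
  have hmono := monotoneOn_rpow_mul_pEnergy hp1 hθ (fun r hr => hφ r hr.le) hflux
  have hVz₀ : z₀ ^ (p * (θ - 1) / (p - 1)) * pEnergy p φ φ' z₀ = 0 := by
    simp [pEnergy, hφz, hφ'z, zero_rpow (by linarith : p ≠ 0)]
  have hvanish : ∀ a ∈ Ioo 0 z₀, φ a = 0 := fun a ⟨ha, haz⟩ => by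
    have hle := hmono ha hz₀pos haz.le
    dsimp only at hle
    rw [hVz₀] at hle
    exact eq_zero_of_pEnergy_eq_zero hp1 (le_antisymm
      (nonpos_of_mul_nonpos_right hle (rpow_pos_of_pos ha _)) (pEnergy_nonneg hp1 a))
  have hlim : Tendsto φ (𝓝[>] 0) (𝓝 1) :=
    h0 ▸ (hφ 0 le_rfl).continuousAt.continuousWithinAt
  have hlim0 : Tendsto φ (𝓝[>] 0) (𝓝 0) :=
    tendsto_const_nhds.congr'
      (eventuallyEq_of_mem (Ioo_mem_nhdsGT hz₀pos) fun a ha => (hvanish a ha).symm)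
  exact one_ne_zero (tendsto_nhds_unique hlim hlim0)

/-- Every zero of the solution `φ` of `(r^(θ-1)|φ'|^(p-2) φ')' + r^(θ-1)|φ|^(p-2) φ = 0`,
`φ(0)=1`, `φ'(0)=0`, is simple. -/
theorem stmt_15 (p θ : ℝ) (hp : 2 ≤ p) (hθ : 1 ≤ θ) (φ φ' g' : ℝ → ℝ)
    (hφ : ∀ r, 0 ≤ r → HasDerivAt φ (φ' r) r)
    (hφ'cont : ContinuousOn φ' (Set.Ici 0))
    (hg : ∀ r, 0 ≤ r →
      HasDerivAt (fun t => t ^ (θ - 1) * (|φ' t| ^ (p - 2) * φ' t)) (g' r) r)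
    (hg'cont : ContinuousOn g' (Set.Ici 0))
    (hode : ∀ r, 0 ≤ r → g' r + r ^ (θ - 1) * (|φ r| ^ (p - 2) * φ r) = 0)
    (h0 : φ 0 = 1) (h0' : φ' 0 = 0) :
    ∀ z₀, 0 ≤ z₀ → φ z₀ = 0 → φ' z₀ ≠ 0 :=
  stmt_15_general p θ hp hθ φ φ' g' hφ hg hode h0
end
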